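/- Let X be an m×n matrix of distinct indeterminates (m ≤ n, m ≥ 2), Z the m×(n-1) submatrix obtained by deleting the last column, and Y the (m-1)×(n-1) submatrix obtained from Z by deleting the last row. With respect to a diagonal term order, the set of leading terms of the maximal minors of X equals the union of the set of leading terms of the maximal minors of Z and x_{mn} times the set of leading terms of the maximal minors of Y; consequently, (in(G_m(X))) = (in(G_m(Z))) + x_{mn}·(in(G_{m-1}(Y))). -/
import Mathlib


open MvPolynomial

variable {K : Type*} [Field K]

/-- The leading exponent (multidegree) of a polynomial with respect to a monomial order. -/
noncomputable def leadExp {σ : Type*} (m : MonomialOrder σ) (p : MvPolynomial σ K) : σ →₀ ℕ :=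
  m.toSyn.symm (p.support.sup fun e => m.toSyn e)

/-- The leading monomial of a polynomial. -/
noncomputable def leadMon {σ : Type*} (m : MonomialOrder σ) (p : MvPolynomial σ K) :
    MvPolynomial σ K :=
  MvPolynomial.monomial (leadExp m p) (1 : K)

/-- A monomial order on the variables of the generic `m × n` matrix is diagonal. -/
def IsDiagonalOrder (K : Type*) [Field K] (m n : ℕ) (mo : MonomialOrder (Fin m × Fin n)) :
    Prop :=
  ∀ (k : ℕ) (r : Fin k → Fin m) (c : Fin k → Fin n), StrictMono r → StrictMono c →
    leadExp mo (Matrix.det (Matrix.of fun i j : Fin k => (MvPolynomial.X (r i, c j) :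
        MvPolynomial (Fin m × Fin n) K))) = ∑ i : Fin k, Finsupp.single (r i, c i) 1

private lemma sum_split_fin {M : Type*} [AddCommMonoid M] {m : ℕ} (hm : 1 ≤ m)
    (f : Fin m → M) :
    ∑ i, f i = f ⟨m - 1, by omega⟩ + ∑ i : Fin (m - 1), f (Fin.castLE (Nat.sub_le m 1) i) := by
  have h : m - 1 + 1 = m := by omega
  have e1 : finCongr h (Fin.last (m - 1)) = (⟨m - 1, by omega⟩ : Fin m) := by ext; simp
  have e2 : ∀ i : Fin (m - 1), finCongr h i.castSucc = Fin.castLE (Nat.sub_le m 1) i :=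
    fun i => by ext; simp
  rw [← (finCongr h).sum_comp f, Fin.sum_univ_castSucc, e1, add_comm]
  simp only [e2]

private lemma X_eq_mon {σ : Type*} (p : σ) :
    (MvPolynomial.X p : MvPolynomial σ K) = monomial (Finsupp.single p 1) 1 := by
  simpa using (X_pow_eq_monomial (R := K) (n := p) (e := 1))

/-- Let `X` be the generic `m × n` matrix (`2 ≤ m ≤ n`), `Z` the submatrix
obtained by deleting the last column, `Y` the submatrix of `Z` obtained by deleting the last
row. With respect to a diagonal order, the leading monomials of the maximal minors of `X` are
the leading monomials of the maximal minors of `Z` together with `x_{mn}` times the leading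
monomials of the maximal minors of `Y`; consequently
`(in 𝒢_m(X)) = (in 𝒢_m(Z)) + x_{mn}·(in 𝒢_{m-1}(Y))`. -/
theorem leadingTerms_maximalMinors_decomposition (m n : ℕ) (hm : 2 ≤ m) (hmn : m ≤ n)
    (mo : MonomialOrder (Fin m × Fin n)) (hdiag : IsDiagonalOrder K m n mo)
    (GX GZ GY : Set (MvPolynomial (Fin m × Fin n) K))
    (hGX : GX = {p | ∃ c : Fin m → Fin n, StrictMono c ∧
      p = Matrix.det (Matrix.of fun i j : Fin m => (MvPolynomial.X (i, c j) :
        MvPolynomial (Fin m × Fin n) K))})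
    (hGZ : GZ = {p | ∃ c : Fin m → Fin n, StrictMono c ∧ (∀ i, (c i : ℕ) < n - 1) ∧
      p = Matrix.det (Matrix.of fun i j : Fin m => (MvPolynomial.X (i, c j) :
        MvPolynomial (Fin m × Fin n) K))})
    (hGY : GY = {p | ∃ c : Fin (m - 1) → Fin n, StrictMono c ∧ (∀ i, (c i : ℕ) < n - 1) ∧
      p = Matrix.det (Matrix.of fun i j : Fin (m - 1) =>
        (MvPolynomial.X (Fin.castLE (Nat.sub_le m 1) i, c j) :
          MvPolynomial (Fin m × Fin n) K))}) :
    leadMon mo '' GX =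
      leadMon mo '' GZ ∪
        (fun q => (MvPolynomial.X (⟨m - 1, by omega⟩, ⟨n - 1, by omega⟩) :
          MvPolynomial (Fin m × Fin n) K) * q) '' (leadMon mo '' GY) ∧
    Ideal.span (leadMon mo '' GX) =
      Ideal.span (leadMon mo '' GZ) ⊔
        Ideal.span {(MvPolynomial.X (⟨m - 1, by omega⟩, ⟨n - 1, by omega⟩) :
          MvPolynomial (Fin m × Fin n) K)} * Ideal.span (leadMon mo '' GY) := by
  subst hGX hGZ hGY
  set a : Fin m := ⟨m - 1, by omega⟩ with ha
  set b : Fin n := ⟨n - 1, by omega⟩ with hb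
  have hm1 : (1 : ℕ) ≤ m := by omega
  -- lead monomial of a maximal minor of X
  have hLX : ∀ (c : Fin m → Fin n), StrictMono c →
      leadMon mo (Matrix.det (Matrix.of fun i j : Fin m => (MvPolynomial.X (i, c j) :
        MvPolynomial (Fin m × Fin n) K))) =
      monomial (∑ i : Fin m, Finsupp.single (i, c i) 1) (1 : K) := by
    intro c hc
    unfold leadMon
    exact congrArg (fun e => monomial e (1 : K)) (hdiag m id c strictMono_id hc)
  have hLY : ∀ (c : Fin (m - 1) → Fin n), StrictMono c →
      leadMon mo (Matrix.det (Matrix.of fun i j : Fin (m - 1) =>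
        (MvPolynomial.X (Fin.castLE (Nat.sub_le m 1) i, c j) :
          MvPolynomial (Fin m × Fin n) K))) =
      monomial (∑ i : Fin (m - 1),
        Finsupp.single (Fin.castLE (Nat.sub_le m 1) i, c i) 1) (1 : K) := by
    intro c hc
    unfold leadMon
    rw [hdiag (m - 1) (Fin.castLE (Nat.sub_le m 1)) c (Fin.strictMono_castLE _) hc]
  -- the key combination lemma: if c : Fin m → Fin n, strict mono, with c a = b, then
  have hkey : ∀ (c : Fin m → Fin n), StrictMono c → c a = b →
      monomial (∑ i : Fin m, Finsupp.single (i, c i) 1) (1 : K) =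
      MvPolynomial.X (a, b) *
        monomial (∑ i : Fin (m - 1),
          Finsupp.single (Fin.castLE (Nat.sub_le m 1) i,
            c (Fin.castLE (Nat.sub_le m 1) i)) 1) (1 : K) := by
    intro c hc hcab
    rw [X_eq_mon, monomial_mul, one_mul]
    congr 1
    rw [sum_split_fin hm1 (fun i => Finsupp.single (i, c i) 1)]
    rw [← ha, hcab]
  have key : leadMon mo '' {p | ∃ c : Fin m → Fin n, StrictMono c ∧
      p = Matrix.det (Matrix.of fun i j : Fin m => (MvPolynomial.X (i, c j) :
        MvPolynomial (Fin m × Fin n) K))} =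
      leadMon mo '' {p | ∃ c : Fin m → Fin n, StrictMono c ∧ (∀ i, (c i : ℕ) < n - 1) ∧
      p = Matrix.det (Matrix.of fun i j : Fin m => (MvPolynomial.X (i, c j) :
        MvPolynomial (Fin m × Fin n) K))} ∪
        (fun q => (MvPolynomial.X (a, b) :
          MvPolynomial (Fin m × Fin n) K) * q) '' (leadMon mo ''
          {p | ∃ c : Fin (m - 1) → Fin n, StrictMono c ∧ (∀ i, (c i : ℕ) < n - 1) ∧
      p = Matrix.det (Matrix.of fun i j : Fin (m - 1) =>
        (MvPolynomial.X (Fin.castLE (Nat.sub_le m 1) i, c j) :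
          MvPolynomial (Fin m × Fin n) K))}) := by
    ext q
    simp only [Set.mem_image, Set.mem_union, Set.mem_setOf_eq]
    constructor
    · rintro ⟨p, ⟨c, hc, rfl⟩, rfl⟩
      by_cases hlast : (c a : ℕ) < n - 1
      · left
        refine ⟨_, ⟨c, hc, fun i => ?_, rfl⟩, rfl⟩
        have h1 : c i ≤ c a := hc.monotone (Fin.le_def.mpr (by have := i.isLt; simp only [ha]; omega))
        have := Fin.le_def.mp h1
        omega
      · right
        have hcab : c a = b := by
          have := (c a).isLt
          ext
          simp only [hb]
          omega
        set c' : Fin (m - 1) → Fin n := fun i => c (Fin.castLE (Nat.sub_le m 1) i) with hc'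
        have hc'mono : StrictMono c' := hc.comp (Fin.strictMono_castLE _)
        have hc'lt : ∀ i, (c' i : ℕ) < n - 1 := by
          intro i
          have h1 : c' i < c a := hc (Fin.lt_def.mpr i.isLt)
          have := Fin.lt_def.mp h1
          rw [hcab] at this
          simpa [hb] using this
        refine ⟨_, ⟨_, ⟨c', hc'mono, hc'lt, rfl⟩, rfl⟩, ?_⟩
        rw [hLX c hc, hLY c' hc'mono, hkey c hc hcab]
    · rintro (⟨p, ⟨c, hc, _, rfl⟩, rfl⟩ | ⟨q', ⟨p, ⟨c, hc, hclt, rfl⟩, rfl⟩, rfl⟩)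
      · exact ⟨_, ⟨c, hc, rfl⟩, rfl⟩
      · -- extend c to Fin m
        set cE : Fin m → Fin n :=
          fun i => if h : (i : ℕ) < m - 1 then c ⟨i, h⟩ else b with hct
        have hctmono : StrictMono cE := by
          intro i j hij
          have hij' := Fin.lt_def.mp hij
          by_cases hj : (j : ℕ) < m - 1
          · have hi : (i : ℕ) < m - 1 := by omega
            simp only [hct, dif_pos hi, dif_pos hj]
            exact hc (Fin.lt_def.mpr hij')
          · have hi : (i : ℕ) < m - 1 := by have := j.isLt; omega
            simp only [hct, dif_pos hi, dif_neg hj]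
            have := hclt ⟨i, hi⟩
            exact Fin.lt_def.mpr this
        have hca : cE a = b := by
          simp only [hct, ha]
          rw [dif_neg (by simp)]
        have hcrest : ∀ i : Fin (m - 1), cE (Fin.castLE (Nat.sub_le m 1) i) = c i := by
          intro i
          simp only [hct]
          rw [dif_pos (by simpa using i.isLt)]
          exact congrArg c (by ext; simp)
        refine ⟨_, ⟨cE, hctmono, rfl⟩, ?_⟩
        rw [hLX cE hctmono, hLY c hc, hkey cE hctmono hca]
        simp only [hcrest]
  refine ⟨key, ?_⟩
  rw [key, Ideal.span_union, Ideal.span_mul_span', Set.singleton_mul]
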